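/- Let Φ be a cellular automaton of radius R with Φ(𝔄) = 𝔄, let λ = (λ₀;λ₁,…,λ_D) be a rational eigenvalue with locally determined eigenfunction f satisfying f∘Φ = λ₀ f, and let a ∈ 𝔄~ with a' = Φ(a). If y, z ∈ Y_{r+R}(a) (so that y, z ∈ Y_r(a')), then λ^{y−z}·f_z(a)/f_y(a) = λ^{y−z}·f_z(a')/f_y(a'). Hence the displacement of a dislocation is invariant under Φ. -/

import Mathlib

open Topology MeasureTheory

/-- The configuration space `A^(ℤ^D)`, modelled as functions `(Fin D → ℤ) → A`. -/
abbrev Config (A : Type*) (D : ℕ) := (Fin D → ℤ) → A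

/-- Sup-norm of a lattice point `z ∈ ℤ^D`. -/
def normZ {D : ℕ} (z : Fin D → ℤ) : ℕ :=
  Finset.univ.sup fun i => (z i).natAbs

/-- The shift action: `(shift v a) z = a (z + v)`. -/
def shift {A : Type*} {D : ℕ} (v : Fin D → ℤ) (a : Config A D) : Config A D :=
  fun z => a (z + v)

/-- A subshift: a closed, shift-invariant subset of `A^(ℤ^D)`. -/
def IsSubshift {A : Type*} {D : ℕ} [TopologicalSpace A] (S : Set (Config A D)) : Prop :=
  IsClosed S ∧ ∀ v : Fin D → ℤ, shift v '' S = S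

/-- A cellular automaton of radius `r`: shift-commuting and locally determined
with radius `r`. -/
def IsCA {A : Type*} {D : ℕ} (Φ : Config A D → Config A D) (r : ℕ) : Prop :=
  (∀ (v : Fin D → ℤ) (a : Config A D), Φ (shift v a) = shift v (Φ a)) ∧
  ∀ (a b : Config A D) (z : Fin D → ℤ),
    (∀ w, normZ w ≤ r → a (z + w) = b (z + w)) → Φ a z = Φ b z

/-- The defect field `F_a(z)`: the largest radius `r` such that `a` restricted to
the ball `B(z,r)` agrees with (a translate of) some element of `S`. -/
noncomputable def defectField {A : Type*} {D : ℕ} (S : Set (Config A D))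
    (a : Config A D) (z : Fin D → ℤ) : ℕ∞ :=
  ⨆ (r : ℕ) (_ : ∃ b ∈ S, ∀ w, normZ w ≤ r → b (z + w) = a (z + w)), (r : ℕ∞)

/-- `𝔄~` : configurations with unbounded defect field. -/
def tildeSet {A : Type*} {D : ℕ} (S : Set (Config A D)) : Set (Config A D) :=
  {a | (⨆ z, defectField S a z) = ⊤}

/-- `Y_r(a) = { z : F_a(z) ≥ r }`, the non-defective region of range `r`. -/
def Yset {A : Type*} {D : ℕ} (S : Set (Config A D)) (a : Config A D) (r : ℕ) :
    Set (Fin D → ℤ) :=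
  {z | (r : ℕ∞) ≤ defectField S a z}

/-- `y` and `z` are connected by a trail inside `Y` (adjacency = sup-distance 1). -/
def TrailConn {D : ℕ} (Y : Set (Fin D → ℤ)) (y z : Fin D → ℤ) : Prop :=
  y ∈ Y ∧ Relation.ReflTransGen (fun p q => q ∈ Y ∧ normZ (q - p) = 1) y z

/-- A defect of `a` is removable if it can be erased by modifying `a` only near
the defective region. -/
def Removable {A : Type*} {D : ℕ} (S : Set (Config A D)) (a : Config A D) : Prop :=
  ∃ r : ℕ, 0 < r ∧ ∃ a' ∈ S, ∀ z ∈ Yset S a r, a' z = a z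

/-- The trail-connected component of `y` in `Y_r(a)` is projective: it meets
`Y_R(a)` for every `R`. -/
def Projective {A : Type*} {D : ℕ} (S : Set (Config A D)) (a : Config A D)
    (r : ℕ) (y : Fin D → ℤ) : Prop :=
  y ∈ Yset S a r ∧
    ∀ R : ℕ, ∃ w, TrailConn (Yset S a r) y w ∧ (R : ℕ∞) ≤ defectField S a w

/-- `λ^z = λ₁^{z₁} ⋯ λ_D^{z_D}`. -/
noncomputable def prodPow {D : ℕ} (l : Fin D → ℂ) (v : Fin D → ℤ) : ℂ :=
  ∏ i, l i ^ (v i)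

/-- A continuous `(Φ,σ)`-eigenfunction on `S` with generalized eigenvalue `(l0; l)`. -/
def IsEigenFun {A : Type*} {D : ℕ} [TopologicalSpace A] (S : Set (Config A D))
    (Φ : Config A D → Config A D) (l0 : ℂ) (l : Fin D → ℂ)
    (f : Config A D → ℂ) : Prop :=
  ContinuousOn f S ∧ (∃ a ∈ S, f a ≠ 0) ∧
  (∀ a ∈ S, f (Φ a) = l0 * f a) ∧
  ∀ a ∈ S, ∀ v : Fin D → ℤ, f (shift v a) = prodPow l v * f a

/-- The set `Spec(𝔄,Φ,σ)` of generalized eigenvalues (in the torus `𝕋^{D+1}`). -/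
def Spec' {A : Type*} {D : ℕ} [TopologicalSpace A] (S : Set (Config A D))
    (Φ : Config A D → Config A D) : Set (ℂ × (Fin D → ℂ)) :=
  {p | ‖p.1‖ = 1 ∧ (∀ i, ‖p.2 i‖ = 1) ∧
       ∃ f, IsEigenFun S Φ p.1 p.2 f}

/-- A continuous `σ`-eigenfunction on `S`. -/
def IsShiftEigenFun {A : Type*} {D : ℕ} [TopologicalSpace A] (S : Set (Config A D))
    (l : Fin D → ℂ) (f : Config A D → ℂ) : Prop :=
  ContinuousOn f S ∧ (∃ a ∈ S, f a ≠ 0) ∧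
  ∀ a ∈ S, ∀ v : Fin D → ℤ, f (shift v a) = prodPow l v * f a

/-- The group `Spec(𝔄,σ)` of shift eigenvalues. -/
def SpecSigma {A : Type*} {D : ℕ} [TopologicalSpace A] (S : Set (Config A D)) :
    Set (Fin D → ℂ) :=
  {l | (∀ i, ‖l i‖ = 1) ∧ ∃ f, IsShiftEigenFun S l f}

/-- Displacement `γ_{x,z}(λ) = λ^{x−z} f_z(a) / f_x(a)` of a dislocation. -/
noncomputable def disp {A : Type*} {D : ℕ} (l : Fin D → ℂ) (f : Config A D → ℂ)
    (a : Config A D) (x z : Fin D → ℤ) : ℂ :=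
  prodPow l (x - z) * f (shift z a) / f (shift x a)

/-- `C` is comeager relative to the subspace `S`. -/
def ComeagerIn {A : Type*} {D : ℕ} [TopologicalSpace A] (S C : Set (Config A D)) : Prop :=
  {x : S | (x : Config A D) ∈ C} ∈ residual S

/-- An a.e.-continuous (Baire-generically continuous), bounded, a.e.-nonzero
eigenfunction with eigenvalue `(l0; l)`, all equations holding comeagerly. -/
def IsAEEigenFun {A : Type*} {D : ℕ} [TopologicalSpace A] (S : Set (Config A D))
    (Φ : Config A D → Config A D) (l0 : ℂ) (l : Fin D → ℂ)
    (f : Config A D → ℂ) : Prop :=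
  (∃ M : ℝ, ∀ a ∈ S, ‖f a‖ ≤ M) ∧
  ComeagerIn S {a | ContinuousWithinAt f S a} ∧
  (¬ ComeagerIn S {a | f a = 0}) ∧
  ComeagerIn S {a | f (Φ a) = l0 * f a} ∧
  ∀ v : Fin D → ℤ, ComeagerIn S {a | f (shift v a) = prodPow l v * f a}

/-- The set `Spec_ae(𝔄,Φ,σ)` of a.e.-eigenvalues. -/
def SpecAE {A : Type*} {D : ℕ} [TopologicalSpace A] (S : Set (Config A D))
    (Φ : Config A D → Config A D) : Set (ℂ × (Fin D → ℂ)) :=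
  {p | ‖p.1‖ = 1 ∧ (∀ i, ‖p.2 i‖ = 1) ∧
       ∃ f, IsAEEigenFun S Φ p.1 p.2 f}

def EqOnBall {A : Type*} {D : ℕ} (a b : Config A D) (x : Fin D → ℤ) (ρ : ℕ) : Prop :=
  ∀ w, normZ w ≤ ρ → a (x + w) = b (x + w)

lemma normZ_add_le {D : ℕ} (w w' : Fin D → ℤ) : normZ (w + w') ≤ normZ w + normZ w' :=
  Finset.sup_le fun i _ => (Int.natAbs_add_le _ _).trans <|
    add_le_add (Finset.le_sup (f := fun i => (w i).natAbs) (Finset.mem_univ i))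
      (Finset.le_sup (f := fun i => (w' i).natAbs) (Finset.mem_univ i))

lemma IsSubshift.shift_mem {A : Type*} {D : ℕ} [TopologicalSpace A] {S : Set (Config A D)}
    (hS : IsSubshift S) (v : Fin D → ℤ) {b : Config A D} (hb : b ∈ S) : shift v b ∈ S :=
  hS.2 v ▸ Set.mem_image_of_mem _ hb

namespace EqOnBall

variable {A : Type*} {D : ℕ} {a b : Config A D} {x : Fin D → ℤ} {ρ : ℕ}

lemma mono {ρ' : ℕ} (h : EqOnBall a b x ρ) (hρ : ρ' ≤ ρ) : EqOnBall a b x ρ' :=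
  fun w hw => h w (hw.trans hρ)

lemma shift (h : EqOnBall a b x ρ) : EqOnBall (shift x a) (shift x b) 0 ρ := by
  intro w hw
  simpa only [_root_.shift, zero_add, add_comm w x] using h w hw

lemma map {Φ : Config A D → Config A D} {R : ℕ} (hΦ : IsCA Φ R)
    (h : EqOnBall a b x (ρ + R)) : EqOnBall (Φ a) (Φ b) x ρ := by
  intro w hw
  refine hΦ.2 a b (x + w) fun w' hw' => ?_
  rw [add_assoc]
  exact h (w + w') ((normZ_add_le w w').trans (add_le_add hw hw'))

end EqOnBall

lemma exists_mem_eqOnBall_of_mem_Yset {A : Type*} {D : ℕ} {S : Set (Config A D)}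
    {a : Config A D} {m : ℕ} (hm : 0 < m) {x : Fin D → ℤ} (hx : x ∈ Yset S a m) :
    ∃ b ∈ S, EqOnBall b a x m := by
  have hlt : ((m - 1 : ℕ) : ℕ∞) < defectField S a x :=
    lt_of_lt_of_le (by exact_mod_cast Nat.sub_one_lt_of_lt hm) hx
  obtain ⟨ρ, hρ⟩ := lt_iSup_iff.mp hlt
  obtain ⟨⟨b, hb, hba⟩, hρm⟩ := lt_iSup_iff.mp hρ
  have : m ≤ ρ := by have := (Nat.cast_lt (α := ℕ∞)).mp hρm; omega
  exact ⟨b, hb, fun w hw => hba w (hw.trans this)⟩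

/-- Where `a` agrees with a configuration of `S` on a ball of radius `r' + R`, the local rules of
`Φ` and `f` only see that configuration, on which `f ∘ Φ = λ₀ f`. -/
lemma apply_shift_map_eq_mul {A : Type*} {D : ℕ} {S : Set (Config A D)}
    {Φ : Config A D → Config A D} {R : ℕ} (hΦ : IsCA Φ R) {l0 : ℂ} {f : Config A D → ℂ}
    (hf : ∀ c ∈ S, f (Φ c) = l0 * f c) {r' : ℕ}
    (hloc : ∀ a b : Config A D, (∀ w, normZ w ≤ r' → a w = b w) → f a = f b)
    {a b : Config A D} {x : Fin D → ℤ} (hb : shift x b ∈ S) (hba : EqOnBall b a x (r' + R)) :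
    f (shift x (Φ a)) = l0 * f (shift x a) := by
  have hf_local : ∀ {c c' : Config A D}, EqOnBall c c' x r' → f (shift x c) = f (shift x c') :=
    fun h => hloc _ _ fun w hw => by simpa only [zero_add] using h.shift w hw
  calc f (shift x (Φ a)) = f (shift x (Φ b)) := (hf_local (hba.map hΦ)).symm
    _ = f (Φ (shift x b)) := by rw [hΦ.1]
    _ = l0 * f (shift x b) := hf _ hb
    _ = l0 * f (shift x a) := by rw [hf_local (hba.mono (Nat.le_add_right r' R))]

theorem displacement_Phi_invariant_general {A : Type*} {D : ℕ}
    [TopologicalSpace A]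
    (Φ : Config A D → Config A D) (R : ℕ) (hΦ : IsCA Φ R)
    (S : Set (Config A D)) (hS : IsSubshift S)
    (l0 : ℂ) (l : Fin D → ℂ) (hl0 : ‖l0‖ = 1)
    (f : Config A D → ℂ) (heig : IsEigenFun S Φ l0 l f)
    (r' : ℕ)
    (hloc : ∀ a b : Config A D, (∀ w, normZ w ≤ r' → a w = b w) → f a = f b)
    (a : Config A D)
    (r : ℕ) (hr : r' + 1 ≤ r)
    (y z : Fin D → ℤ)
    (hy : y ∈ Yset S a (r + R)) (hz : z ∈ Yset S a (r + R)) :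
    prodPow l (y - z) * f (shift z a) / f (shift y a) =
      prodPow l (y - z) * f (shift z (Φ a)) / f (shift y (Φ a)) := by
  have hf_map : ∀ x ∈ Yset S a (r + R), f (shift x (Φ a)) = l0 * f (shift x a) := by
    intro x hx
    obtain ⟨b, hb, hba⟩ := exists_mem_eqOnBall_of_mem_Yset (by omega) hx
    exact apply_shift_map_eq_mul hΦ heig.2.2.1 hloc (hS.shift_mem x hb)
      (hba.mono (by omega))
  have hl0_ne : l0 ≠ 0 := norm_ne_zero_iff.mp (hl0 ▸ one_ne_zero)
  rw [hf_map y hy, hf_map z hz, mul_div_assoc, mul_div_assoc, mul_div_mul_left _ _ hl0_ne]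

/-- the displacement of a dislocation is invariant under `Φ`:
`λ^{y−z} f_z(a)/f_y(a) = λ^{y−z} f_z(Φa)/f_y(Φa)` for `y,z ∈ Y_{r+R}(a)`. -/
theorem displacement_Phi_invariant {A : Type*} {D : ℕ} [Fintype A]
    [TopologicalSpace A] [DiscreteTopology A]
    (Φ : Config A D → Config A D) (R : ℕ) (hΦ : IsCA Φ R)
    (S : Set (Config A D)) (hS : IsSubshift S) (himg : Φ '' S = S)
    (l0 : ℂ) (l : Fin D → ℂ) (hl0 : ‖l0‖ = 1)
    (hrat : (∃ n : ℕ, 0 < n ∧ l0 ^ n = 1) ∧ ∀ i, ∃ n : ℕ, 0 < n ∧ (l i) ^ n = 1)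
    (f : Config A D → ℂ) (heig : IsEigenFun S Φ l0 l f)
    (r' : ℕ)
    (hloc : ∀ a b : Config A D, (∀ w, normZ w ≤ r' → a w = b w) → f a = f b)
    (hmod : ∀ a ∈ S, ‖f a‖ = 1)
    (a : Config A D) (ha : a ∈ tildeSet S)
    (r : ℕ) (hr : r' + 1 ≤ r)
    (y z : Fin D → ℤ)
    (hy : y ∈ Yset S a (r + R)) (hz : z ∈ Yset S a (r + R)) :
    prodPow l (y - z) * f (shift z a) / f (shift y a) =
      prodPow l (y - z) * f (shift z (Φ a)) / f (shift y (Φ a)) :=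
  displacement_Phi_invariant_general Φ R hΦ S hS l0 l hl0 f heig r' hloc a r hr y z hy hz
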